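/- With S and R as in the characteristic decomposition (S = θ_t - cθ_x, R = θ_t + cθ_x) of θ_tt + (γ₁ - h²/g)θ_t = c(θ)(c(θ)θ_x)_x - hJ, the quantities satisfy the balance law (S² + R²)_t + (c(θ)(S² - R²))_x = (h²/g - γ₁)(R + S)² - 2hJ(R + S). -/

import Mathlib

noncomputable def pdx (f : ℝ → ℝ → ℝ) (x t : ℝ) : ℝ := deriv (fun y => f y t) x
noncomputable def pdt (f : ℝ → ℝ → ℝ) (x t : ℝ) : ℝ := deriv (fun s => f x s) t

lemma hasDerivAt_slice_x (f : ℝ → ℝ → ℝ) (x t : ℝ)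
    (hf : DifferentiableAt ℝ (Function.uncurry f) (x, t)) :
    HasDerivAt (fun y => f y t) (pdx f x t) x := by
  have h2 : HasDerivAt (fun y : ℝ => ((y, t) : ℝ × ℝ)) (1, 0) x :=
    HasDerivAt.prodMk (hasDerivAt_id x) (hasDerivAt_const x t)
  have h3 : HasDerivAt (fun y => f y t)
      (fderiv ℝ (Function.uncurry f) (x, t) (1, 0)) x :=
    (hf.hasFDerivAt.comp_hasDerivAt x h2 :)
  exact h3.differentiableAt.hasDerivAt

lemma hasDerivAt_slice_t (f : ℝ → ℝ → ℝ) (x t : ℝ)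
    (hf : DifferentiableAt ℝ (Function.uncurry f) (x, t)) :
    HasDerivAt (fun s => f x s) (pdt f x t) t := by
  have h2 : HasDerivAt (fun s : ℝ => ((x, s) : ℝ × ℝ)) (0, 1) t :=
    HasDerivAt.prodMk (hasDerivAt_const t x) (hasDerivAt_id t)
  have h3 : HasDerivAt (fun s => f x s)
      (fderiv ℝ (Function.uncurry f) (x, t) (0, 1)) t :=
    hf.hasFDerivAt.comp_hasDerivAt t h2
  exact h3.differentiableAt.hasDerivAt

lemma pdx_eq_fderiv (f : ℝ → ℝ → ℝ) (x t : ℝ)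
    (hf : DifferentiableAt ℝ (Function.uncurry f) (x, t)) :
    pdx f x t = fderiv ℝ (Function.uncurry f) (x, t) (1, 0) := by
  have h2 : HasDerivAt (fun y : ℝ => ((y, t) : ℝ × ℝ)) (1, 0) x :=
    HasDerivAt.prodMk (hasDerivAt_id x) (hasDerivAt_const x t)
  exact (hf.hasFDerivAt.comp_hasDerivAt x h2).deriv

lemma pdt_eq_fderiv (f : ℝ → ℝ → ℝ) (x t : ℝ)
    (hf : DifferentiableAt ℝ (Function.uncurry f) (x, t)) :
    pdt f x t = fderiv ℝ (Function.uncurry f) (x, t) (0, 1) := by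
  have h2 : HasDerivAt (fun s : ℝ => ((x, s) : ℝ × ℝ)) (0, 1) t :=
    HasDerivAt.prodMk (hasDerivAt_const t x) (hasDerivAt_id t)
  exact (hf.hasFDerivAt.comp_hasDerivAt t h2).deriv

lemma contDiff_pdx (f : ℝ → ℝ → ℝ) (hf : ContDiff ℝ (⊤ : ℕ∞) (Function.uncurry f)) :
    ContDiff ℝ (⊤ : ℕ∞) (Function.uncurry (pdx f)) := by
  have h : ContDiff ℝ (⊤ : ℕ∞) (fun p : ℝ × ℝ => fderiv ℝ (Function.uncurry f) p ((1 : ℝ), (0 : ℝ))) :=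
    (hf.fderiv_right (by simp)).clm_apply contDiff_const
  have he : Function.uncurry (pdx f) =
      fun p : ℝ × ℝ => fderiv ℝ (Function.uncurry f) p ((1 : ℝ), (0 : ℝ)) := by
    funext p
    exact pdx_eq_fderiv f p.1 p.2 ((hf.differentiable (by simp)) (p.1, p.2))
  rw [he]; exact h

lemma contDiff_pdt (f : ℝ → ℝ → ℝ) (hf : ContDiff ℝ (⊤ : ℕ∞) (Function.uncurry f)) :
    ContDiff ℝ (⊤ : ℕ∞) (Function.uncurry (pdt f)) := by
  have h : ContDiff ℝ (⊤ : ℕ∞) (fun p : ℝ × ℝ => fderiv ℝ (Function.uncurry f) p ((0 : ℝ), (1 : ℝ))) :=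
    (hf.fderiv_right (by simp)).clm_apply contDiff_const
  have he : Function.uncurry (pdt f) =
      fun p : ℝ × ℝ => fderiv ℝ (Function.uncurry f) p ((0 : ℝ), (1 : ℝ)) := by
    funext p
    exact pdt_eq_fderiv f p.1 p.2 ((hf.differentiable (by simp)) (p.1, p.2))
  rw [he]; exact h

lemma pdt_pdx_comm (f : ℝ → ℝ → ℝ) (hf : ContDiff ℝ (⊤ : ℕ∞) (Function.uncurry f)) (x t : ℝ) :
    pdt (pdx f) x t = pdx (pdt f) x t := by
  set F := Function.uncurry f with hF
  have hdF : Differentiable ℝ F := hf.differentiable (by simp)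
  have hfd : ContDiff ℝ (⊤ : ℕ∞) (fun p : ℝ × ℝ => fderiv ℝ F p) := hf.fderiv_right (by simp)
  have hdd : DifferentiableAt ℝ (fun p : ℝ × ℝ => fderiv ℝ F p) (x, t) :=
    (hfd.differentiable (by simp)) (x, t)
  have hsymm := second_derivative_symmetric (f' := fderiv ℝ F)
    (fun y => (hdF y).hasFDerivAt) hdd.hasFDerivAt
  -- compute pdt (pdx f)
  have h1 : pdt (pdx f) x t = fderiv ℝ (Function.uncurry (pdx f)) (x, t) (0, 1) :=
    pdt_eq_fderiv (pdx f) x t (((contDiff_pdx f hf).differentiable (by simp)) (x, t))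
  have h2 : pdx (pdt f) x t = fderiv ℝ (Function.uncurry (pdt f)) (x, t) (1, 0) :=
    pdx_eq_fderiv (pdt f) x t (((contDiff_pdt f hf).differentiable (by simp)) (x, t))
  have he1 : Function.uncurry (pdx f) =
      fun p : ℝ × ℝ => fderiv ℝ F p ((1 : ℝ), (0 : ℝ)) := by
    funext p; exact pdx_eq_fderiv f p.1 p.2 (hdF (p.1, p.2))
  have he2 : Function.uncurry (pdt f) =
      fun p : ℝ × ℝ => fderiv ℝ F p ((0 : ℝ), (1 : ℝ)) := by
    funext p; exact pdt_eq_fderiv f p.1 p.2 (hdF (p.1, p.2))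
  rw [h1, h2, he1, he2]
  rw [fderiv_clm_apply hdd (differentiableAt_const _),
      fderiv_clm_apply hdd (differentiableAt_const _)]
  simp [hsymm (0, 1) (1, 0)]

theorem stmt_6 (γ₁ : ℝ) (g h c : ℝ → ℝ)
    (hg : ContDiff ℝ (⊤ : ℕ∞) g) (hh : ContDiff ℝ (⊤ : ℕ∞) h) (hc : ContDiff ℝ (⊤ : ℕ∞) c)
    (hcpos : ∀ s, 0 < c s) (hgpos : ∀ s, 0 < g s)
    (θ J : ℝ → ℝ → ℝ)
    (hθ : ContDiff ℝ (⊤ : ℕ∞) (Function.uncurry θ))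
    (hJsmooth : ContDiff ℝ (⊤ : ℕ∞) (Function.uncurry J))
    (wave : ∀ x t : ℝ,
      pdt (pdt θ) x t + (γ₁ - h (θ x t) ^ 2 / g (θ x t)) * pdt θ x t =
        c (θ x t) * pdx (fun y s => c (θ y s) * pdx θ y s) x t - h (θ x t) * J x t)
    (S R : ℝ → ℝ → ℝ)
    (hS : ∀ x t, S x t = pdt θ x t - c (θ x t) * pdx θ x t)
    (hR : ∀ x t, R x t = pdt θ x t + c (θ x t) * pdx θ x t) :
    ∀ x t : ℝ,
      pdt (fun y s => S y s ^ 2 + R y s ^ 2) x t +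
        pdx (fun y s => c (θ y s) * (S y s ^ 2 - R y s ^ 2)) x t =
      (h (θ x t) ^ 2 / g (θ x t) - γ₁) * (R x t + S x t) ^ 2 -
        2 * h (θ x t) * J x t * (R x t + S x t) := by
  intro x t
  have hθd : Differentiable ℝ (Function.uncurry θ) := hθ.differentiable (by simp)
  have hpx : ContDiff ℝ (⊤ : ℕ∞) (Function.uncurry (pdx θ)) := contDiff_pdx θ hθ
  have hpt : ContDiff ℝ (⊤ : ℕ∞) (Function.uncurry (pdt θ)) := contDiff_pdt θ hθ
  -- values
  set u : ℝ := θ x t with hu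
  set p : ℝ := pdx θ x t with hp
  set q : ℝ := pdt θ x t with hq
  set a : ℝ := pdx (pdx θ) x t with ha
  set b : ℝ := pdt (pdt θ) x t with hb
  set m : ℝ := pdx (pdt θ) x t with hm
  have hcomm : pdt (pdx θ) x t = m := pdt_pdx_comm θ hθ x t
  -- t-slice derivatives at fixed x
  have hQt : HasDerivAt (fun s => pdt θ x s) b t :=
    hasDerivAt_slice_t (pdt θ) x t ((hpt.differentiable (by simp)) (x, t))
  have hPt : HasDerivAt (fun s => pdx θ x s) m t := by
    have := hasDerivAt_slice_t (pdx θ) x t ((hpx.differentiable (by simp)) (x, t))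
    rwa [hcomm] at this
  have hθt : HasDerivAt (fun s => θ x s) q t := hasDerivAt_slice_t θ x t (hθd (x, t))
  have hCt : HasDerivAt (fun s => c (θ x s)) (deriv c u * q) t :=
    ((hc.differentiable (by simp) u).hasDerivAt).comp t hθt
  -- x-slice derivatives at fixed t
  have hQx : HasDerivAt (fun y => pdt θ y t) m x :=
    hasDerivAt_slice_x (pdt θ) x t ((hpt.differentiable (by simp)) (x, t))
  have hPx : HasDerivAt (fun y => pdx θ y t) a x :=
    hasDerivAt_slice_x (pdx θ) x t ((hpx.differentiable (by simp)) (x, t))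
  have hθx : HasDerivAt (fun y => θ y t) p x := hasDerivAt_slice_x θ x t (hθd (x, t))
  have hCx : HasDerivAt (fun y => c (θ y t)) (deriv c u * p) x :=
    ((hc.differentiable (by simp) u).hasDerivAt).comp x hθx
  set c' : ℝ := deriv c u with hc'
  -- compute the pdx in the wave equation
  have hwave_inner : pdx (fun y s => c (θ y s) * pdx θ y s) x t = c' * p * p + c u * a := by
    have : deriv (fun y => c (θ y t) * pdx θ y t) x = _ := (hCx.mul hPx).deriv
    exact this
  have hW := wave x t
  rw [hwave_inner] at hW
  -- compute pdt (S^2 + R^2)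
  have hSR1 : (fun y s => S y s ^ 2 + R y s ^ 2) =
      fun y s => (pdt θ y s - c (θ y s) * pdx θ y s) ^ 2 +
        (pdt θ y s + c (θ y s) * pdx θ y s) ^ 2 := by
    funext y s; rw [hS, hR]
  have hSd : HasDerivAt (fun s => pdt θ x s - c (θ x s) * pdx θ x s)
      (b - (c' * q * pdx θ x t + c (θ x t) * m)) t := hQt.sub (hCt.mul hPt)
  have hRd : HasDerivAt (fun s => pdt θ x s + c (θ x s) * pdx θ x s)
      (b + (c' * q * pdx θ x t + c (θ x t) * m)) t := hQt.add (hCt.mul hPt)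
  have hT1 : pdt (fun y s => S y s ^ 2 + R y s ^ 2) x t =
      2 * (q - c u * p) * (b - (c' * q * p + c u * m)) +
      2 * (q + c u * p) * (b + (c' * q * p + c u * m)) := by
    rw [hSR1]
    have hd : deriv (fun s => (pdt θ x s - c (θ x s) * pdx θ x s) ^ 2 + (pdt θ x s + c (θ x s) * pdx θ x s) ^ 2) t = _ := ((hSd.pow 2).add (hRd.pow 2)).deriv
    rw [pdt, hd]
    push_cast
    ring
  -- compute pdx (c (S^2 - R^2))
  have hSR2 : (fun y s => c (θ y s) * (S y s ^ 2 - R y s ^ 2)) =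
      fun y s => c (θ y s) * ((pdt θ y s - c (θ y s) * pdx θ y s) ^ 2 -
        (pdt θ y s + c (θ y s) * pdx θ y s) ^ 2) := by
    funext y s; rw [hS, hR]
  have hSdx : HasDerivAt (fun y => pdt θ y t - c (θ y t) * pdx θ y t)
      (m - (c' * p * pdx θ x t + c (θ x t) * a)) x := hQx.sub (hCx.mul hPx)
  have hRdx : HasDerivAt (fun y => pdt θ y t + c (θ y t) * pdx θ y t)
      (m + (c' * p * pdx θ x t + c (θ x t) * a)) x := hQx.add (hCx.mul hPx)
  have hT2 : pdx (fun y s => c (θ y s) * (S y s ^ 2 - R y s ^ 2)) x t =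
      c' * p * ((q - c u * p) ^ 2 - (q + c u * p) ^ 2) +
      c u * (2 * (q - c u * p) * (m - (c' * p * p + c u * a)) -
        2 * (q + c u * p) * (m + (c' * p * p + c u * a))) := by
    rw [hSR2]
    have hd : deriv (fun y => c (θ y t) * ((pdt θ y t - c (θ y t) * pdx θ y t) ^ 2 - (pdt θ y t + c (θ y t) * pdx θ y t) ^ 2)) x = _ := (hCx.mul ((hSdx.pow 2).sub (hRdx.pow 2))).deriv
    rw [pdx, hd]
    simp only [Pi.sub_apply, Pi.pow_apply]
    push_cast
    ring
  rw [hT1, hT2, hS x t, hR x t]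
  linear_combination (4 * q) * hW
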